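/- For every real z ≥ 0, the first Riesz-mean of the Laplacian eigenvalues on the circle S¹ satisfies R₁(z) ≤ (4/3)·(z + 1/12)^{3/2}. Moreover, for every natural number l there exists z in the open interval (l², (l+1)²) for which equality holds. -/
import Mathlib


/-- First Riesz-mean of the Laplacian eigenvalues on the circle `S¹`: the eigenvalue `0`
has multiplicity `1` and the eigenvalues `l²`, `l ≥ 1`, have multiplicity `2`. -/
noncomputable def R1S1 (z : ℝ) : ℝ :=
  max z 0 + ∑' l : ℕ, 2 * max (z - ((l : ℝ) + 1) ^ 2) 0

lemma sumsq (l : ℕ) : ∑ k ∈ Finset.range l, ((k : ℝ) + 1) ^ 2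
    = (l : ℝ) * (l + 1) * (2 * l + 1) / 6 := by
  induction l with
  | zero => simp
  | succ n ih => rw [Finset.sum_range_succ, ih]; push_cast; ring

lemma R1_eq (l : ℕ) (z : ℝ) (h1 : (l : ℝ) ^ 2 ≤ z) (h2 : z ≤ ((l : ℝ) + 1) ^ 2) :
    R1S1 z = (2 * l + 1) * z - (l : ℝ) * (l + 1) * (2 * l + 1) / 3 := by
  have hz0 : (0 : ℝ) ≤ z := le_trans (by positivity) h1
  have hts : ∑' k : ℕ, 2 * max (z - ((k : ℝ) + 1) ^ 2) 0
      = ∑ k ∈ Finset.range l, 2 * max (z - ((k : ℝ) + 1) ^ 2) 0 := by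
    apply tsum_eq_sum
    intro k hk
    have hk' : l ≤ k := by simpa using hk
    have hle : ((l : ℝ) + 1) ≤ (k : ℝ) + 1 := by
      have : (l : ℝ) ≤ k := by exact_mod_cast hk'
      linarith
    have hz : z ≤ ((k : ℝ) + 1) ^ 2 := by nlinarith
    simp [max_eq_right (sub_nonpos.mpr hz)]
  have hterm : ∀ k ∈ Finset.range l, 2 * max (z - ((k : ℝ) + 1) ^ 2) 0
      = 2 * (z - ((k : ℝ) + 1) ^ 2) := by
    intro k hk
    have hk' : k < l := Finset.mem_range.mp hk
    have h1' : ((k : ℝ) + 1) ≤ l := by exact_mod_cast Nat.succ_le_of_lt hk'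
    have hp : (0 : ℝ) ≤ (k : ℝ) + 1 := by positivity
    have : ((k : ℝ) + 1) ^ 2 ≤ z := le_trans (by nlinarith) h1
    rw [max_eq_left (sub_nonneg.mpr this)]
  rw [R1S1, max_eq_left hz0, hts, Finset.sum_congr rfl hterm]
  have : ∑ k ∈ Finset.range l, 2 * (z - ((k : ℝ) + 1) ^ 2)
      = 2 * ((l : ℝ) * z - ∑ k ∈ Finset.range l, ((k : ℝ) + 1) ^ 2) := by
    simp only [mul_sub]
    rw [Finset.sum_sub_distrib, Finset.sum_const, Finset.card_range, ← Finset.mul_sum,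
      nsmul_eq_mul]
    ring
  rw [this, sumsq]
  ring

lemma key_ineq (s a : ℝ) (hs : 0 ≤ s) (ha : 0 ≤ a) :
    a * s ^ 2 - a ^ 3 / 12 ≤ (4 / 3) * s ^ 3 := by
  nlinarith [mul_nonneg (sq_nonneg (s - a / 2)) (by linarith : (0 : ℝ) ≤ s + a / 4)]

lemma rpow_32 (t : ℝ) (ht : 0 ≤ t) : t ^ ((3 : ℝ) / 2) = (Real.sqrt t) ^ 3 := by
  rw [Real.sqrt_eq_rpow, ← Real.rpow_natCast (t ^ ((1:ℝ)/2)) 3, ← Real.rpow_mul ht]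
  norm_num

theorem riesz_mean_circle_shifted_upper_bound :
    (∀ z : ℝ, 0 ≤ z → R1S1 z ≤ (4 / 3) * (z + 1 / 12) ^ ((3 : ℝ) / 2)) ∧
    (∀ l : ℕ, ∃ z : ℝ, z ∈ Set.Ioo ((l : ℝ) ^ 2) (((l : ℝ) + 1) ^ 2) ∧
      R1S1 z = (4 / 3) * (z + 1 / 12) ^ ((3 : ℝ) / 2)) := by
  constructor
  · intro z hz
    set l : ℕ := ⌊Real.sqrt z⌋₊ with hl
    have hs0 : 0 ≤ Real.sqrt z := Real.sqrt_nonneg z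
    have h1 : (l : ℝ) ≤ Real.sqrt z := Nat.floor_le hs0
    have h2 : Real.sqrt z < (l : ℝ) + 1 := Nat.lt_floor_add_one _
    have hzsq : Real.sqrt z ^ 2 = z := Real.sq_sqrt hz
    have hb1 : (l : ℝ) ^ 2 ≤ z := by nlinarith
    have hb2 : z ≤ ((l : ℝ) + 1) ^ 2 := by nlinarith
    rw [R1_eq l z hb1 hb2]
    have ht : (0 : ℝ) ≤ z + 1 / 12 := by linarith
    rw [rpow_32 _ ht]
    set s := Real.sqrt (z + 1 / 12) with hsdef
    have hss : s ^ 2 = z + 1 / 12 := Real.sq_sqrt ht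
    have hsn : 0 ≤ s := Real.sqrt_nonneg _
    have ha : (0 : ℝ) ≤ 2 * (l : ℝ) + 1 := by positivity
    have := key_ineq s (2 * (l : ℝ) + 1) hsn ha
    nlinarith [this]
  · intro l
    refine ⟨(l : ℝ) ^ 2 + l + 1 / 6, ⟨by nlinarith [(by positivity : (0:ℝ) ≤ (l:ℝ))], by
      nlinarith [(by positivity : (0:ℝ) ≤ (l:ℝ))]⟩, ?_⟩
    set z : ℝ := (l : ℝ) ^ 2 + l + 1 / 6 with hzdef
    have hb1 : (l : ℝ) ^ 2 ≤ z := by rw [hzdef]; nlinarith [(by positivity : (0:ℝ) ≤ (l:ℝ))]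
    have hb2 : z ≤ ((l : ℝ) + 1) ^ 2 := by rw [hzdef]; nlinarith [(by positivity : (0:ℝ) ≤ (l:ℝ))]
    rw [R1_eq l z hb1 hb2]
    have ht : (0 : ℝ) ≤ z + 1 / 12 := by rw [hzdef]; positivity
    rw [rpow_32 _ ht]
    have hzt : z + 1 / 12 = ((2 * (l : ℝ) + 1) / 2) ^ 2 := by rw [hzdef]; ring
    have hsq : Real.sqrt (z + 1 / 12) = (2 * (l : ℝ) + 1) / 2 := by
      rw [hzt, Real.sqrt_sq (by positivity)]
    rw [hsq]
    ring
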